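/- arXiv:2410.10166 — 2 statements merged into one kernel-verified Lean document; each statement's English description precedes it below -/
import Mathlib

section
/- Let φ_1,…,φ_m ∈ ℝ^d be feature vectors spanning ℝ^d, let π be a probability distribution on {1,…,m} such that V(π) = Σ_j π(j) φ_j φ_jᵀ is invertible, and set g(π) = max_{1≤j≤m} φ_jᵀ V(π)^{-1} φ_j. Fix ε > 0 and δ ∈ (0,1), and for each j let n(j) = ⌈(2 π(j) g(π) / ε²)·log(1/δ)⌉. Then the matrix V = Σ_{j=1}^m n(j) φ_j φ_jᵀ is positive definite and for every index j one has φ_jᵀ V^{-1} φ_j ≤ ε² / (2 log(1/δ)). -/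
/-! Since `n j ≥ κ w j` with `κ = 2 log(1/δ) g(w) / ε²`, the matrix `V` dominates `κ V(w)` in the
Loewner order. Inversion reverses that order, so
`φⱼᵀ V⁻¹ φⱼ ≤ κ⁻¹ φⱼᵀ V(w)⁻¹ φⱼ ≤ κ⁻¹ g(w) = ε² / (2 log(1/δ))`. -/

open Matrix Finset

/-- The design matrix `V(w) = Σ j, w j • φ j (φ j)ᵀ` of feature vectors `φ` under
weights `w`. -/
noncomputable def designMatrix {ι : Type*} [Fintype ι] {d : ℕ} (φ : ι → Fin d → ℝ)
    (w : ι → ℝ) : Matrix (Fin d) (Fin d) ℝ :=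
  ∑ j, w j • vecMulVec (φ j) (φ j)

/-- `g(w) = max_j (φ j)ᵀ V(w)⁻¹ (φ j)`. -/
noncomputable def gOpt {ι : Type*} [Fintype ι] [Nonempty ι] {d : ℕ} (φ : ι → Fin d → ℝ)
    (w : ι → ℝ) : ℝ :=
  Finset.univ.sup' Finset.univ_nonempty (fun j => φ j ⬝ᵥ ((designMatrix φ w)⁻¹ *ᵥ φ j))

open scoped MatrixOrder

namespace Matrix

variable {n : Type*}

lemma PosDef.of_le {A B : Matrix n n ℝ} (hA : A.PosDef) (hAB : A ≤ B) : B.PosDef := by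
  simpa using hA.add_posSemidef (le_iff.mp hAB)

variable [Fintype n] [DecidableEq n]

lemma PosDef.mulVec_inv_mulVec {A : Matrix n n ℝ} (hA : A.PosDef) (x : n → ℝ) :
    A *ᵥ (A⁻¹ *ᵥ x) = x := by
  rw [mulVec_mulVec, mul_nonsing_inv _ hA.det_pos.ne'.isUnit, one_mulVec]

lemma PosDef.two_mul_dotProduct_sub_le_dotProduct_inv_mulVec {A : Matrix n n ℝ} (hA : A.PosDef)
    (x y : n → ℝ) : 2 * (x ⬝ᵥ y) - y ⬝ᵥ (A *ᵥ y) ≤ x ⬝ᵥ (A⁻¹ *ᵥ x) := by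
  set z := A⁻¹ *ᵥ x
  have hAz : A *ᵥ z = x := hA.mulVec_inv_mulVec x
  have hzy : z ⬝ᵥ (A *ᵥ y) = x ⬝ᵥ y := by
    rw [dotProduct_mulVec, ← mulVec_transpose, (isHermitian_iff_isSymm.mp hA.isHermitian).eq, hAz]
  have hsq := hA.posSemidef.dotProduct_mulVec_nonneg (y - z)
  simp only [star_trivial, mulVec_sub, dotProduct_sub, sub_dotProduct, hAz, hzy] at hsq
  rw [dotProduct_comm y x, dotProduct_comm z x] at hsq
  linarith

/-- Evaluate the lower bound of `two_mul_dotProduct_sub_le_dotProduct_inv_mulVec` for `A` at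
`y = B⁻¹ x`, where the one for `B` is attained. -/
lemma PosDef.dotProduct_inv_mulVec_le_of_le {A B : Matrix n n ℝ} (hA : A.PosDef) (hAB : A ≤ B)
    (x : n → ℝ) : x ⬝ᵥ (B⁻¹ *ᵥ x) ≤ x ⬝ᵥ (A⁻¹ *ᵥ x) := by
  set y := B⁻¹ *ᵥ x
  have hBy : B *ᵥ y = x := (hA.of_le hAB).mulVec_inv_mulVec x
  have hAB_y : y ⬝ᵥ (A *ᵥ y) ≤ y ⬝ᵥ (B *ᵥ y) := by
    simpa [sub_mulVec] using (le_iff.mp hAB).dotProduct_mulVec_nonneg y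
  have hA_y := hA.two_mul_dotProduct_sub_le_dotProduct_inv_mulVec x y
  rw [hBy, dotProduct_comm y x] at hAB_y
  linarith

end Matrix

section DesignMatrix

variable {ι : Type*} [Fintype ι] {d : ℕ} (φ : ι → Fin d → ℝ)

lemma designMatrix_sub (w w' : ι → ℝ) :
    designMatrix φ w' - designMatrix φ w = designMatrix φ (w' - w) := by
  simp only [designMatrix, Pi.sub_apply, sub_smul, sum_sub_distrib]

lemma designMatrix_smul (c : ℝ) (w : ι → ℝ) :
    designMatrix φ (c • w) = c • designMatrix φ w := by
  simp only [designMatrix, Pi.smul_apply, smul_eq_mul, mul_smul, smul_sum]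

lemma designMatrix_posSemidef {w : ι → ℝ} (hw : 0 ≤ w) : (designMatrix φ w).PosSemidef :=
  posSemidef_sum _ fun j _ => (posSemidef_vecMulVec_self_star (φ j)).smul (hw j)

lemma designMatrix_posDef {w : ι → ℝ} (hw : 0 ≤ w) (hdet : IsUnit (designMatrix φ w).det) :
    (designMatrix φ w).PosDef :=
  (designMatrix_posSemidef φ hw).posDef_iff_isUnit.mpr ((isUnit_iff_isUnit_det _).mpr hdet)

lemma designMatrix_mono {w w' : ι → ℝ} (h : w ≤ w') : designMatrix φ w ≤ designMatrix φ w' := by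
  rw [le_iff, designMatrix_sub]
  exact designMatrix_posSemidef φ (sub_nonneg.mpr h)

variable [Nonempty ι]

lemma le_gOpt (w : ι → ℝ) (j : ι) : φ j ⬝ᵥ ((designMatrix φ w)⁻¹ *ᵥ φ j) ≤ gOpt φ w :=
  le_sup' (fun j => φ j ⬝ᵥ ((designMatrix φ w)⁻¹ *ᵥ φ j)) (mem_univ j)

lemma gOpt_pos [Nonempty (Fin d)] {w : ι → ℝ} (hW : (designMatrix φ w).PosDef) :
    0 < gOpt φ w := by
  obtain ⟨j, hj⟩ : ∃ j, φ j ≠ 0 := by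
    by_contra! h
    have hzero : designMatrix φ w = 0 := by simp [designMatrix, h]
    simpa [hzero] using hW.trace_pos
  simpa using (hW.inv.dotProduct_mulVec_pos hj).trans_le (le_gOpt φ w j)

end DesignMatrix

theorem design_allocation_quadratic_form_bound_general
    {ι : Type*} [Fintype ι] [Nonempty ι] {d : ℕ} (φ : ι → Fin d → ℝ)
    (w : ι → ℝ) (hw0 : ∀ j, 0 ≤ w j)
    (hVw : IsUnit (designMatrix φ w).det)
    (ε δ : ℝ) (hε : 0 < ε) (hδ0 : 0 < δ) (hδ1 : δ < 1)
    (n : ι → ℕ) (hn : ∀ j, n j = ⌈2 * w j * gOpt φ w / ε ^ 2 * Real.log (1 / δ)⌉₊)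
    (V : Matrix (Fin d) (Fin d) ℝ)
    (hV : V = ∑ j, (n j : ℝ) • vecMulVec (φ j) (φ j)) :
    V.PosDef ∧ ∀ j, φ j ⬝ᵥ (V⁻¹ *ᵥ φ j) ≤ ε ^ 2 / (2 * Real.log (1 / δ)) := by
  have hL : 0 < Real.log (1 / δ) := Real.log_pos (one_lt_one_div hδ0 hδ1)
  rcases isEmpty_or_nonempty (Fin d) with _ | _
  · refine ⟨.of_dotProduct_mulVec_pos (Subsingleton.elim _ _)
      fun x hx => (hx (Subsingleton.elim x 0)).elim, fun j => ?_⟩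
    simp only [dotProduct, univ_eq_empty, sum_empty]
    positivity
  have hW := designMatrix_posDef φ hw0 hVw
  have hg := gOpt_pos φ hW
  set κ := 2 * Real.log (1 / δ) / ε ^ 2 * gOpt φ w with hκ_def
  have hκ : 0 < κ := by positivity
  have hκW : κ • designMatrix φ w ≤ V := by
    rw [← designMatrix_smul, hV]
    refine designMatrix_mono φ fun j => (le_of_eq ?_).trans (hn j ▸ Nat.le_ceil _)
    simp only [Pi.smul_apply, smul_eq_mul, κ]
    ring
  have hκW_pd := hW.smul hκ
  have : Invertible κ := invertibleOfNonzero hκ.ne'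
  refine ⟨hκW_pd.of_le hκW, fun j => ?_⟩
  calc φ j ⬝ᵥ (V⁻¹ *ᵥ φ j) ≤ φ j ⬝ᵥ ((κ • designMatrix φ w)⁻¹ *ᵥ φ j) :=
        hκW_pd.dotProduct_inv_mulVec_le_of_le hκW _
    _ = κ⁻¹ * φ j ⬝ᵥ ((designMatrix φ w)⁻¹ *ᵥ φ j) := by
        rw [Matrix.inv_smul (A := designMatrix φ w) κ hVw, invOf_eq_inv, smul_mulVec,
          dotProduct_smul, smul_eq_mul]
    _ ≤ κ⁻¹ * gOpt φ w := by gcongr; exact le_gOpt φ w j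
    _ = ε ^ 2 / (2 * Real.log (1 / δ)) := by rw [hκ_def]; field_simp

/-- **Sample allocation from a design controls all quadratic forms.**
Let `φ 1, …, φ m ∈ ℝ^d` span `ℝ^d`, let `w` be a probability distribution on `{1, …, m}`
with `V(w) = Σ j, w j • φ j (φ j)ᵀ` invertible, and set
`g(w) = max_j (φ j)ᵀ V(w)⁻¹ (φ j)`. Fix `ε > 0` and `δ ∈ (0,1)`, and for each `j` let
`n j = ⌈(2 w j g(w) / ε²) log(1/δ)⌉`. Then `V = Σ j, n j • φ j (φ j)ᵀ` is positive
definite and `(φ j)ᵀ V⁻¹ (φ j) ≤ ε² / (2 log(1/δ))` for every `j`. -/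
theorem design_allocation_quadratic_form_bound
    {ι : Type*} [Fintype ι] [Nonempty ι] {d : ℕ} (φ : ι → Fin d → ℝ)
    (hspan : Submodule.span ℝ (Set.range φ) = ⊤)
    (w : ι → ℝ) (hw0 : ∀ j, 0 ≤ w j) (hw1 : ∑ j, w j = 1)
    (hVw : IsUnit (designMatrix φ w).det)
    (ε δ : ℝ) (hε : 0 < ε) (hδ0 : 0 < δ) (hδ1 : δ < 1)
    (n : ι → ℕ) (hn : ∀ j, n j = ⌈2 * w j * gOpt φ w / ε ^ 2 * Real.log (1 / δ)⌉₊)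
    (V : Matrix (Fin d) (Fin d) ℝ)
    (hV : V = ∑ j, (n j : ℝ) • vecMulVec (φ j) (φ j)) :
    V.PosDef ∧ ∀ j, φ j ⬝ᵥ (V⁻¹ *ᵥ φ j) ≤ ε ^ 2 / (2 * Real.log (1 / δ)) :=
  design_allocation_quadratic_form_bound_general φ w hw0 hVw ε δ hε hδ0 hδ1 n hn V hV
end

section
/- Let X be a nonempty finite set, let q : X → ℝ be a probability mass function with q(x) > 0 for all x ∈ X, let r : X → ℝ, and let β > 0. Define Z = Σ_{x∈X} q(x) exp(r(x)/β) and p*(x) = q(x) exp(r(x)/β) / Z. Then for all x^w, x^l ∈ X, β·log(p*(x^w)/q(x^w)) − β·log(p*(x^l)/q(x^l)) = r(x^w) − r(x^l); in particular the partition function Z cancels, so the Bradley–Terry preference probability σ(r(x^w) − r(x^l)) equals σ( β·log(p*(x^w)/q(x^w)) − β·log(p*(x^l)/q(x^l)) ), where σ(t) = 1/(1+exp(−t)) is the logistic sigmoid. -/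
open Finset Real

noncomputable def sigmoid (t : ℝ) : ℝ := 1 / (1 + Real.exp (-t))

theorem mul_log_tilt_div_self {a β Z : ℝ} (ha : a ≠ 0) (hβ : β ≠ 0) (hZ : Z ≠ 0) (t : ℝ) :
    β * log (a * exp (t / β) / Z / a) = t - β * log Z := by
  rw [mul_div_assoc, mul_div_cancel_left₀ _ ha, log_div (exp_ne_zero _) hZ, log_exp, mul_sub,
    mul_div_cancel₀ _ hβ]

theorem dpo_reward_reparameterization_general
    {X : Type*} [Fintype X] [Nonempty X] (q r : X → ℝ)
    (hq : ∀ x, 0 < q x) (β : ℝ) (hβ : 0 < β)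
    (Z : ℝ) (hZ : Z = ∑ x, q x * Real.exp (r x / β))
    (pstar : X → ℝ) (hpstar : ∀ x, pstar x = q x * Real.exp (r x / β) / Z)
    (xw xl : X) :
    β * Real.log (pstar xw / q xw) - β * Real.log (pstar xl / q xl) = r xw - r xl ∧
    _root_.sigmoid (r xw - r xl) =
      _root_.sigmoid (β * Real.log (pstar xw / q xw) - β * Real.log (pstar xl / q xl)) := by
  have hZpos : 0 < Z := hZ ▸ sum_pos (fun x _ => mul_pos (hq x) (exp_pos _)) univ_nonempty
  have hlog (x : X) : β * log (pstar x / q x) = r x - β * log Z := by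
    rw [hpstar x]
    exact mul_log_tilt_div_self (hq x).ne' hβ.ne' hZpos.ne' (r x)
  have hcancel : β * log (pstar xw / q xw) - β * log (pstar xl / q xl) = r xw - r xl := by
    rw [hlog, hlog]
    ring
  exact ⟨hcancel, by rw [hcancel]⟩

/-- **DPO reward reparameterization identity.**
Let `X` be a nonempty finite set, `q` a probability mass function with `q x > 0` for all
`x`, `r : X → ℝ`, `β > 0`, and let `p* x = q x * exp (r x / β) / Z` with
`Z = Σ x, q x * exp (r x / β)`. Then for all `xw, xl ∈ X`,
`β·log(p* xw / q xw) − β·log(p* xl / q xl) = r xw − r xl`; in particular the partition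
function cancels, so the Bradley–Terry preference probability `σ(r xw − r xl)` equals
`σ(β·log(p* xw / q xw) − β·log(p* xl / q xl))`. -/
theorem dpo_reward_reparameterization
    {X : Type*} [Fintype X] [Nonempty X] (q r : X → ℝ)
    (hq : ∀ x, 0 < q x) (hq1 : ∑ x, q x = 1) (β : ℝ) (hβ : 0 < β)
    (Z : ℝ) (hZ : Z = ∑ x, q x * Real.exp (r x / β))
    (pstar : X → ℝ) (hpstar : ∀ x, pstar x = q x * Real.exp (r x / β) / Z)
    (xw xl : X) :
    β * Real.log (pstar xw / q xw) - β * Real.log (pstar xl / q xl) = r xw - r xl ∧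
    _root_.sigmoid (r xw - r xl) =
      _root_.sigmoid (β * Real.log (pstar xw / q xw) - β * Real.log (pstar xl / q xl)) :=
  dpo_reward_reparameterization_general q r hq β hβ Z hZ pstar hpstar xw xl
end
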